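/- The datagram FEP construction satisfies datagram Traffic Shaping: for every key k output by Gen, every message m ∈ M_ℓin ∪ {⊤}, and every integer p ≥ 0, the ciphertext c output by Send(k, m, p) satisfies (1) if c ≠ ⊥ then |c| = p, and (2) if m = ⊤ and p ≤ ℓ_out then c ≠ ⊥. -/

import Mathlib

/-! Byte strings -/

abbrev Byte := Fin 256
abbrev Bytes := List Byte

def byte (n : ℕ) : Byte := ⟨n % 256, Nat.mod_lt n (by norm_num)⟩
def b0 : Byte := byte 0
def b1 : Byte := byte 1

/-- Two-byte (big-endian) encoding of a natural number. -/
def enc2 (n : ℕ) : Bytes := [byte (n / 256), byte n]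

/-- Decode the first two bytes of a byte string as a big-endian natural number. -/
def dec2 : Bytes → ℕ
  | a :: b :: _ => 256 * a.val + b.val
  | _ => 0

/-- A nonce-based AEAD scheme on byte strings where `Enc` carries the
`ℓ_Nonce`-byte nonce as a prefix of the ciphertext and `Dec` reads the nonce
from its input, with perfect correctness, length additivity (overhead
`ℓ_Nonce + ℓ_Tag`), and soundness of decryption. -/
structure DAEAD where
  Key : Type
  lNonce : ℕ
  lTag : ℕ
  Enc : Key → Bytes → Bytes → Bytes
  Dec : Key → Bytes → Option Bytes
  correct : ∀ k n m, n.length = lNonce → Dec k (Enc k n m) = some m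
  lenAdd : ∀ k n m, n.length = lNonce → (Enc k n m).length = m.length + (lNonce + lTag)
  decSound : ∀ k c m, Dec k c = some m → ∃ n, n.length = lNonce ∧ c = Enc k n m

/-- `ℓ_Overhead = ℓ_Nonce + ℓ_Tag`. -/
def DAEAD.lOver (A : DAEAD) : ℕ := A.lNonce + A.lTag
/-- `ℓ_out = 65507`, the maximum size of a UDP payload. -/
def lOut : ℕ := 65507
/-- `ℓ_in = ℓ_out − ℓ_Overhead − 3`, the maximum input message length. -/
def lIn (A : DAEAD) : ℕ := lOut - A.lOver - 3
/-- `ℓ_null = 1 + ℓ_Overhead`, the length of a ciphertext of the null message. -/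
def lNull (A : DAEAD) : ℕ := 1 + A.lOver

/-- `Rand(p)`: `p` bytes read off a random tape `T`. -/
def rand (T : ℕ → Byte) (p : ℕ) : Bytes := (List.range p).map T

/-- A datagram `Send` input message: `none` is the null message `⊤`, and
`some msg` is an ordinary message `msg ∈ M_ℓin` (when `|msg| ≤ ℓ_in`). -/
abbrev DMsg := Option Bytes

/-- A datagram `Recv` output: a message, the null message `⊤`, or the error `⊥`. -/
inductive DOut where
  | msg (m : Bytes)
  | top
  | bot
deriving DecidableEq

/-- `Send(k, m, p)` of the datagram FEP construction, using the fresh random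
nonce `nonce` and the random tape `T` (for `Rand`); the output `none` is the
error `⊥`. -/
def dsend (A : DAEAD) (k : A.Key) (nonce : Bytes) (T : ℕ → Byte)
    (m : DMsg) (p : ℤ) : Option Bytes :=
  match m with
  | none =>
    if p < 0 then some (A.Enc k nonce [b0])
    else if p < (lNull A : ℤ) then some (rand T p.toNat)
    else if p ≤ (lOut : ℤ) then
      some (A.Enc k nonce (b0 :: List.replicate (p.toNat - lNull A) b0))
    else none
  | some msg =>
    if p < 0 then
      if msg.length ≤ lIn A then
        some (A.Enc k nonce (b1 :: (enc2 msg.length ++ msg)))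
      else none
    else if (lOut : ℤ) < p ∨ p - (A.lOver : ℤ) - 3 < (msg.length : ℤ) then none
    else
      some (A.Enc k nonce
        (b1 :: (enc2 msg.length ++
          List.replicate (p.toNat - msg.length - A.lOver - 3) b0 ++ msg)))

/-- `Recv(k, c)` of the datagram FEP construction. -/
def drecv (A : DAEAD) (k : A.Key) (c : Bytes) : DOut :=
  if c.length < lNull A then DOut.top
  else
    match A.Dec k c with
    | none => DOut.bot
    | some buf =>
      if buf.headD b0 = b0 then DOut.top
      else DOut.msg (buf.drop (buf.length - dec2 (buf.drop 1)))

/-! With `p ≥ 0`, every branch of `Send` either samples exactly `p` random bytes or pads the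
plaintext to `p - ℓ_Overhead` bytes before encrypting, so length additivity of `Enc` gives
`|c| = p`; the null message is rejected only when `p > ℓ_out`. -/

namespace DAEAD

theorem length_enc (A : DAEAD) (k : A.Key) {n : Bytes} (hn : n.length = A.lNonce) (m : Bytes) :
    (A.Enc k n m).length = m.length + A.lOver :=
  A.lenAdd k n m hn

end DAEAD

theorem length_rand (T : ℕ → Byte) (p : ℕ) : (rand T p).length = p := by
  simp [rand]

section dsend

variable (A : DAEAD) (k : A.Key) {nonce : Bytes} (T : ℕ → Byte) {p : ℤ} {c : Bytes}

theorem dsend_none_length (hn : nonce.length = A.lNonce) (hp : 0 ≤ p)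
    (hc : dsend A k nonce T none p = some c) : (c.length : ℤ) = p := by
  simp only [dsend, if_neg (not_lt.mpr hp)] at hc
  split_ifs at hc with hnull <;> cases hc
  · rw [length_rand]
    omega
  · rw [A.length_enc k hn, List.length_cons, List.length_replicate]
    simp only [lNull] at hnull ⊢
    omega

theorem dsend_none_ne_none (hp : p ≤ (lOut : ℤ)) : dsend A k nonce T none p ≠ none := by
  simp only [dsend]
  split_ifs <;> simp_all

theorem dsend_some_length (hn : nonce.length = A.lNonce) (hp : 0 ≤ p) (msg : Bytes)
    (hc : dsend A k nonce T (some msg) p = some c) : (c.length : ℤ) = p := by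
  simp only [dsend, if_neg (not_lt.mpr hp)] at hc
  split_ifs at hc with hfit
  cases hc
  rw [A.length_enc k hn]
  simp only [List.length_cons, List.length_append, List.length_replicate, enc2, List.length_nil]
  omega

end dsend

theorem stmt13_general (A : DAEAD) (k : A.Key) (nonce : Bytes) (T : ℕ → Byte)
    (hn : nonce.length = A.lNonce)
    (m : DMsg)
    (p : ℤ) (hp : 0 ≤ p) :
    (∀ c : Bytes, dsend A k nonce T m p = some c → (c.length : ℤ) = p) ∧
    (m = none → p ≤ (lOut : ℤ) → dsend A k nonce T m p ≠ none) := by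
  cases m with
  | none => exact ⟨fun _ => dsend_none_length A k T hn hp, fun _ => dsend_none_ne_none A k T⟩
  | some msg => exact ⟨fun _ => dsend_some_length A k T hn hp msg, nofun⟩

/-- The datagram FEP construction satisfies datagram Traffic
Shaping: for every key `k`, every message `m ∈ M_ℓin ∪ {⊤}`, every integer
`p ≥ 0`, and every choice of the random nonce and random bytes, the ciphertext
`c` output by `Send(k, m, p)` satisfies (1) if `c ≠ ⊥` then `|c| = p`, and
(2) if `m = ⊤` and `p ≤ ℓ_out` then `c ≠ ⊥`. -/
theorem stmt13 (A : DAEAD) (k : A.Key) (nonce : Bytes) (T : ℕ → Byte)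
    (hn : nonce.length = A.lNonce)
    (m : DMsg) (hm : ∀ msg : Bytes, m = some msg → msg.length ≤ lIn A)
    (p : ℤ) (hp : 0 ≤ p) :
    (∀ c : Bytes, dsend A k nonce T m p = some c → (c.length : ℤ) = p) ∧
    (m = none → p ≤ (lOut : ℤ) → dsend A k nonce T m p ≠ none) :=
  stmt13_general A k nonce T hn m p hp
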